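/- arXiv:2512.18957 — 2 statements merged into one kernel-verified Lean document; each statement's English description precedes it below -/
import Mathlib

section
/- Per-coordinate elliptic potential bound (scalar version): let d^{(1)}, …, d^{(K)} be distributions on a set Z and let μ ∈ Δ(Z) satisfy d^{(k)}(z)/μ(z) ≤ C for all z and k (with μ(z) > 0 whenever some d^{(k)}(z) > 0). Then for every z ∈ Z, ∑_{k=1}^K d^{(k)}(z) / ( ∑_{i<k} d^{(i)}(z) + C·μ(z) ) ≤ O(log K); concretely, the sum is at most 4·log(2K). -/
/-!
With `S k = ∑ i < k, a i` and `0 ≤ a k ≤ M`, the term `a k / (S k + M)` is at most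
`2 (log (S (k+1) + M) - log (S k + M))`, because `log (1 + x) ≥ x / (1 + x) ≥ x / 2` for
`0 ≤ x ≤ 1`. The sum telescopes to `2 log ((S K + M) / M) ≤ 2 log (K + 1) ≤ 4 log (2K)`;
if `M ≤ 0`, every term vanishes.
-/
open Finset Real

lemma div_le_two_mul_log_add_sub_log {a t : ℝ} (ha : 0 ≤ a) (hat : a ≤ t) (ht : 0 < t) :
    a / t ≤ 2 * (log (t + a) - log t) := by
  have hta : 0 < t + a := by linarith
  have hlog : a / (t + a) ≤ log (t + a) - log t := by
    have := log_le_sub_one_of_pos (div_pos ht hta)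
    rw [log_div ht.ne' hta.ne'] at this
    have h : t / (t + a) - 1 = -(a / (t + a)) := by field_simp; ring
    linarith
  calc a / t = 2 * (a / (2 * t)) := by field_simp
    _ ≤ 2 * (a / (t + a)) := by gcongr; linarith
    _ ≤ _ := by gcongr

lemma sum_range_div_sum_range_add_le_two_mul_log_sub {a : ℕ → ℝ} {M : ℝ} (hM : 0 < M) (n : ℕ)
    (ha : ∀ i < n, 0 ≤ a i ∧ a i ≤ M) :
    ∑ k ∈ range n, a k / (∑ i ∈ range k, a i + M)
      ≤ 2 * (log (∑ i ∈ range n, a i + M) - log M) := by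
  have hS : ∀ k ≤ n, 0 ≤ ∑ i ∈ range k, a i := fun k hk =>
    sum_nonneg fun i hi => (ha i (by rw [mem_range] at hi; omega)).1
  calc ∑ k ∈ range n, a k / (∑ i ∈ range k, a i + M)
      ≤ ∑ k ∈ range n,
          2 * (log (∑ i ∈ range (k + 1), a i + M) - log (∑ i ∈ range k, a i + M)) := by
        refine sum_le_sum fun k hk => ?_
        rw [mem_range] at hk
        obtain ⟨ha0, haM⟩ := ha k hk
        rw [sum_range_succ, add_right_comm]
        exact div_le_two_mul_log_add_sub_log ha0 (by linarith [hS k hk.le])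
          (by linarith [hS k hk.le])
    _ = _ := by
        rw [← mul_sum, sum_range_sub (fun k => log (∑ i ∈ range k, a i + M))]
        simp

lemma sum_range_div_sum_range_add_le_two_mul_log_succ {a : ℕ → ℝ} {M : ℝ} (n : ℕ)
    (ha : ∀ i < n, 0 ≤ a i ∧ a i ≤ M) :
    ∑ k ∈ range n, a k / (∑ i ∈ range k, a i + M) ≤ 2 * log (n + 1) := by
  rcases le_or_gt M 0 with hM | hM
  · have hzero : ∀ k ∈ range n, a k = 0 := fun k hk => by
      obtain ⟨h0, h1⟩ := ha k (mem_range.1 hk)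
      linarith
    rw [sum_eq_zero fun k hk => by rw [hzero k hk, zero_div]]
    have : (0:ℝ) ≤ log (n + 1) := log_nonneg (by linarith [n.cast_nonneg (α := ℝ)])
    linarith
  · have hsum : ∑ i ∈ range n, a i + M ≤ (n + 1) * M := by
      have := sum_le_sum fun i (hi : i ∈ range n) => (ha i (mem_range.1 hi)).2
      simp only [sum_const, card_range, nsmul_eq_mul] at this
      linarith
    have hsum_pos : 0 < ∑ i ∈ range n, a i + M := by
      have := sum_nonneg fun i (hi : i ∈ range n) => (ha i (mem_range.1 hi)).1
      linarith
    have hlog : log (∑ i ∈ range n, a i + M) - log M ≤ log (n + 1) := by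
      rw [← log_div hsum_pos.ne' hM.ne']
      exact log_le_log (div_pos hsum_pos hM) ((div_le_iff₀ hM).2 hsum)
    linarith [sum_range_div_sum_range_add_le_two_mul_log_sub hM n ha]

lemma Fin.sum_div_sum_lt_add_le_two_mul_log_succ {n : ℕ} {M : ℝ} (f : Fin n → ℝ)
    (hf : ∀ k, 0 ≤ f k ∧ f k ≤ M) :
    ∑ k, f k / (∑ i ∈ univ.filter (· < k), f i + M) ≤ 2 * log (n + 1) := by
  set a : ℕ → ℝ := fun i => if h : i < n then f ⟨i, h⟩ else 0
  have hfa : ∀ k : Fin n, f k = a k := fun k => by simp [a]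
  have hpartial : ∀ k : Fin n, ∑ i ∈ univ.filter (· < k), f i = ∑ i ∈ range k, a i := fun k => by
    rw [filter_gt_eq_Iio, ← Nat.Iio_eq_range, ← Fin.map_valEmbedding_Iio, sum_map]
    exact sum_congr rfl fun i _ => hfa i
  calc ∑ k, f k / (∑ i ∈ univ.filter (· < k), f i + M)
      = ∑ k ∈ range n, a k / (∑ i ∈ range k, a i + M) := by
        rw [← Fin.sum_univ_eq_sum_range]
        exact sum_congr rfl fun k _ => by rw [hpartial, hfa]
    _ ≤ 2 * log (n + 1) := sum_range_div_sum_range_add_le_two_mul_log_succ n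
        fun i hi => by simpa [a, hi] using hf ⟨i, hi⟩

theorem scalar_elliptic_potential_general
    {Z : Type*} (K : ℕ)
    (d : Fin K → Z → ℝ)
    (hd0 : ∀ k z, 0 ≤ d k z)
    (μ : Z → ℝ)
    (C : ℝ)
    (hratio : ∀ k z, d k z ≤ C * μ z) :
    ∀ z, ∑ k, d k z / ((∑ i ∈ Finset.univ.filter (fun i => i < k), d i z) + C * μ z)
      ≤ 4 * Real.log (2 * K) := by
  intro z
  have hlog : 2 * log (K + 1) ≤ 4 * log (2 * K) := by
    rcases K.eq_zero_or_pos with rfl | hK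
    · simp
    have hK1 : (1 : ℝ) ≤ K := by exact_mod_cast hK
    have : log (K + 1) ≤ log (2 * K) := log_le_log (by positivity) (by linarith)
    linarith [log_nonneg (show (1 : ℝ) ≤ K + 1 by linarith)]
  exact (Fin.sum_div_sum_lt_add_le_two_mul_log_succ (fun k => d k z)
    fun k => ⟨hd0 k z, hratio k z⟩).trans hlog

/-- per-coordinate (scalar) elliptic potential bound: if each
`d^{(k)}(z) ≤ C·μ(z)`, then for every `z`,
`∑_k d^{(k)}(z) / (∑_{i<k} d^{(i)}(z) + C·μ(z)) ≤ 4·log(2K)`. -/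
theorem scalar_elliptic_potential
    {Z : Type*} [Fintype Z] (K : ℕ) (hK : 1 ≤ K)
    (d : Fin K → Z → ℝ)
    (hd0 : ∀ k z, 0 ≤ d k z) (hd1 : ∀ k, ∑ z, d k z = 1)
    (μ : Z → ℝ) (hμ0 : ∀ z, 0 ≤ μ z) (hμ1 : ∑ z, μ z = 1)
    (C : ℝ) (hC : 0 < C)
    (hratio : ∀ k z, d k z ≤ C * μ z) :
    ∀ z, ∑ k, d k z / ((∑ i ∈ Finset.univ.filter (fun i => i < k), d i z) + C * μ z)
      ≤ 4 * Real.log (2 * K) :=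
  scalar_elliptic_potential_general K d hd0 μ C hratio
end

section
/- Equivalence of robust coverability and cumulative visitation: for each step h ∈ [H], define C^cv_h := ∑_{(s,a)∈S×A} sup_{π∈Π} d^π_h(s,a), where d^π_h is the occupancy of policy π at step h under a fixed family of kernels. Then the coverability coefficient C_cov := inf_{μ_1,…,μ_H ∈ Δ(S×A)} sup_{π∈Π, h∈[H]} ‖d^π_h / μ_h‖_∞ satisfies C_cov = max_{h∈[H]} C^cv_h, and consequently C_cov ≤ |S|·|A|. -/
/-!
For a single step with envelope `D z = ⨆ π, d π z`, any distribution `μ` with ratio bound `R`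
has `D ≤ R • μ` pointwise, so summing gives `∑ D ≤ R`. Conversely the normalised envelope
`μ = D / ∑ D` attains `R = ∑ D`. The steps are independent, so the optimal tuple is the
normalised envelopes and the coefficient is the largest `∑ D`, which is at most `|S × A|`
because every `d π h z ≤ 1`.
-/

open scoped ENNReal
open Finset

namespace Coverability

variable {α : Type*} [Fintype α]

theorem le_one_of_sum_le_one {f : α → ℝ≥0∞} (hf : ∑ y, f y ≤ 1) (z : α) : f z ≤ 1 :=
  (single_le_sum (fun _ _ => zero_le) (mem_univ z)).trans hf

noncomputable def normalize (f : α → ℝ≥0∞) : α → ℝ≥0∞ := fun z => f z / ∑ y, f y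

theorem sum_normalize {f : α → ℝ≥0∞} (h0 : ∑ y, f y ≠ 0) (htop : ∑ y, f y ≠ ⊤) :
    ∑ z, normalize f z = 1 := by
  simp only [normalize, div_eq_mul_inv, ← sum_mul]
  exact ENNReal.mul_inv_cancel h0 htop

theorem div_normalize_le_sum {f : α → ℝ≥0∞} (h0 : ∑ y, f y ≠ 0) (htop : ∑ y, f y ≠ ⊤)
    {a : ℝ≥0∞} {z : α} (ha : a ≤ f z) : a / normalize f z ≤ ∑ y, f y :=
  ENNReal.div_le_of_le_mul <| by rwa [normalize, ENNReal.mul_div_cancel h0 htop]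

theorem sum_le_iSup_div {f μ : α → ℝ≥0∞} (hμ : ∑ z, μ z ≤ 1) :
    ∑ z, f z ≤ ⨆ z, f z / μ z := by
  set R := ⨆ z, f z / μ z
  rcases eq_or_ne R ⊤ with hR | hR
  · exact hR ▸ le_top
  have hμtop z : μ z ≠ ⊤ :=
    ne_top_of_le_ne_top ENNReal.one_ne_top (le_one_of_sum_le_one hμ z)
  calc ∑ z, f z ≤ ∑ z, R * μ z := sum_le_sum fun z _ =>
        (ENNReal.div_le_iff_le_mul (Or.inr hR) (Or.inl (hμtop z))).1
          (le_iSup (fun z => f z / μ z) z)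
    _ = R * ∑ z, μ z := (mul_sum ..).symm
    _ ≤ R := mul_le_of_le_one_right' hμ

variable {ι : Type*}

theorem one_le_sum_iSup [Nonempty ι] {d : ι → α → ℝ≥0∞} (hd : ∀ π, ∑ z, d π z = 1) :
    1 ≤ ∑ z, ⨆ π, d π z := by
  obtain ⟨π⟩ := ‹Nonempty ι›
  exact (hd π).symm.trans_le (sum_le_sum fun z _ => le_iSup (d · z) π)

theorem sum_iSup_le_card {d : ι → α → ℝ≥0∞} (hd : ∀ π, ∑ z, d π z = 1) :
    ∑ z, ⨆ π, d π z ≤ Fintype.card α := by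
  simpa using sum_le_sum fun z (_ : z ∈ univ) => iSup_le fun π => le_one_of_sum_le_one (hd π).le z

end Coverability

open Coverability in
/-- equivalence of coverability and cumulative visitation:
`C_cov = inf_μ sup_{π,h} ‖d^π_h/μ_h‖_∞` equals `max_h ∑_{(s,a)} sup_π d^π_h(s,a)`,
and consequently `C_cov ≤ |S|·|A|`.  (Stated in `ℝ≥0∞`, where `x / 0 = ⊤` for
`x ≠ 0` and `0 / 0 = 0`, matching the density-ratio convention.) -/
theorem coverability_eq_cumulative_visitation
    {S A : Type*} [Fintype S] [Fintype A] (H : ℕ)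
    {ι : Type*} [Nonempty ι]
    (d : ι → Fin H → S × A → ℝ≥0∞)
    (hd : ∀ π h, ∑ z, d π h z = 1) :
    (⨅ μ : {μ : Fin H → S × A → ℝ≥0∞ // ∀ h, ∑ z, μ h z = 1},
        ⨆ π : ι, ⨆ h : Fin H, ⨆ z : S × A, d π h z / (μ.1 h z))
      = (⨆ h : Fin H, ∑ z, ⨆ π : ι, d π h z) ∧
    (⨅ μ : {μ : Fin H → S × A → ℝ≥0∞ // ∀ h, ∑ z, μ h z = 1},
        ⨆ π : ι, ⨆ h : Fin H, ⨆ z : S × A, d π h z / (μ.1 h z))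
      ≤ (Fintype.card S : ℝ≥0∞) * (Fintype.card A : ℝ≥0∞) := by
  set D : Fin H → S × A → ℝ≥0∞ := fun h z => ⨆ π, d π h z
  have hD0 h : ∑ z, D h z ≠ 0 := (one_le_sum_iSup (hd · h)).trans_lt' zero_lt_one |>.ne'
  have hDtop h : ∑ z, D h z ≠ ⊤ :=
    (sum_iSup_le_card (hd · h)).trans_lt (ENNReal.natCast_lt_top _) |>.ne
  have hopt : (⨅ μ : {μ : Fin H → S × A → ℝ≥0∞ // ∀ h, ∑ z, μ h z = 1},
      ⨆ π : ι, ⨆ h : Fin H, ⨆ z : S × A, d π h z / (μ.1 h z)) = ⨆ h, ∑ z, D h z := by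
    refine le_antisymm ?_ (le_iInf fun μ => iSup_le fun h => ?_)
    · refine iInf_le_of_le ⟨fun h => normalize (D h), fun h => sum_normalize (hD0 h) (hDtop h)⟩ ?_
      exact iSup_le fun π => iSup₂_le fun h z =>
        (div_normalize_le_sum (hD0 h) (hDtop h) (le_iSup (d · h z) π)).trans
          (le_iSup (fun h => ∑ z, D h z) h)
    · calc ∑ z, D h z ≤ ⨆ z, D h z / μ.1 h z := sum_le_iSup_div (μ.2 h).le
        _ = ⨆ z, ⨆ π, d π h z / μ.1 h z := by simp only [D, ENNReal.iSup_div]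
        _ ≤ ⨆ π, ⨆ h, ⨆ z, d π h z / μ.1 h z := by
          rw [iSup_comm]; exact iSup_mono fun π => le_iSup (fun h => ⨆ z, d π h z / μ.1 h z) h
  refine ⟨hopt, hopt.trans_le (iSup_le fun h => ?_)⟩
  simpa [Fintype.card_prod] using sum_iSup_le_card (hd · h)
end
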